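/- arXiv:2202.13192 — 2 statements merged into one kernel-verified Lean document; each statement's English description precedes it below -/
import Mathlib

section
/- Let K be a finite field of characteristic 2 and (V,Q) an anisotropic non-degenerate quadratic K-space (with trivial group action). Then dim_K V ≤ 2, and if dim_K V = 2 then (V,Q) is isometric to the norm form N(K) of the quadratic field extension of K; in particular the Witt group WQ(K) of quadratic forms over K has order 2. -/
/-!
In characteristic 2 the polar form is alternating and every element of the finite field `K` is a
square. If `polar Q u w = 0` and `Q u ≠ 0`, then `Q (s • u + w) = s² Q u + Q w` vanishes for
`s² = Q w / Q u`; so for anisotropic `Q` the orthogonal of `u` lies in `K u`, whence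
`dim V ≤ 2`, and nondegeneracy excludes `dim V = 1`. In dimension 2, a basis `(f, e)` with
`Q e = 1` and `polar Q e f = 1` writes `Q` as the norm form `α x² + x y + y²`, which is
anisotropic exactly when `α` is not of the form `t² + t`. The Artin–Schreier map `t ↦ t² + t`
is additive with kernel `{0, 1}`, so its image has index 2: two such `α, β` differ by some
`t² + t`, and replacing `f` by `f + t e` turns `β` into `α`.
-/

open Polynomial Module QuadraticMap

/-- `Q` is non-degenerate: the radical of its polarization is zero. -/
def QNondeg {K V : Type*} [Field K] [AddCommGroup V] [Module K V]
    (Q : QuadraticForm K V) : Prop :=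
  LinearMap.BilinForm.Nondegenerate Q.polarBilin

section ArtinSchreier
variable (K : Type*) [Field K] [CharP K 2]

def artinSchreier : K →+ K := (frobenius K 2).toAddMonoidHom + AddMonoidHom.id K

variable {K}

@[simp]
lemma artinSchreier_apply (t : K) : artinSchreier K t = t ^ 2 + t := rfl

lemma artinSchreier_eq_zero_iff {t : K} : artinSchreier K t = 0 ↔ t = 0 ∨ t = 1 := by
  rw [artinSchreier_apply, _root_.sq, ← mul_add_one, mul_eq_zero, add_eq_zero_iff_eq_neg,
    CharTwo.neg_eq]

lemma irreducible_X_sq_add_X_add_C {α : K} (hα : α ∉ (artinSchreier K).range) :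
    Irreducible (X ^ 2 + X + C α) := by
  have hdeg : (X ^ 2 + X + C α : K[X]).natDegree = 2 := by compute_degree!
  refine irreducible_of_degree_le_three_of_not_isRoot (by simp [hdeg]) fun t ht => hα ⟨t, ?_⟩
  simpa [CharTwo.add_eq_zero] using ht

variable [Finite K]

lemma index_range_artinSchreier : (artinSchreier K).range.index = 2 := by
  have hker : Nat.card (artinSchreier K).ker = 2 := by
    have : ((artinSchreier K).ker : Set K) = {0, 1} := by
      ext t
      simp only [SetLike.mem_coe, AddMonoidHom.mem_ker, artinSchreier_eq_zero_iff,
        Set.mem_insert_iff, Set.mem_singleton_iff]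
    rw [← SetLike.coe_sort_coe, this, Nat.card_coe_set_eq, Set.ncard_pair zero_ne_one]
  have hrange := (artinSchreier K).range.card_mul_index
  rw [← (artinSchreier K).ker.card_mul_index, AddSubgroup.index_ker, hker] at hrange
  exact Nat.eq_of_mul_eq_mul_left Nat.card_pos (hrange.trans (mul_comm _ _))

lemma exists_notMem_range_artinSchreier : ∃ α : K, α ∉ (artinSchreier K).range := by
  by_contra! h
  have := index_range_artinSchreier (K := K)
  rw [(AddSubgroup.eq_top_iff' _).2 h, AddSubgroup.index_top] at this
  omega

lemma add_mem_range_artinSchreier {α β : K} (hα : α ∉ (artinSchreier K).range)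
    (hβ : β ∉ (artinSchreier K).range) : α + β ∈ (artinSchreier K).range :=
  (AddSubgroup.add_mem_iff_of_index_two index_range_artinSchreier).2 (iff_of_false hα hβ)

end ArtinSchreier

section NormForm
variable {R M : Type*} [CommRing R] [AddCommGroup M] [Module R M]

lemma QuadraticMap.apply_smul_add_smul (Q : QuadraticForm R M) (a b : R) (v w : M) :
    Q (a • v + b • w) = a ^ 2 * Q v + b ^ 2 * Q w + a * b * polar Q v w := by
  rw [QuadraticMap.map_add Q, QuadraticMap.map_smul, QuadraticMap.map_smul, polar_smul_left,
    polar_smul_right]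
  simp only [smul_eq_mul]
  ring

lemma Module.Basis.repr_smul_add_repr_smul (b : Basis (Fin 2) R M) (v : M) :
    b.repr v 0 • b 0 + b.repr v 1 • b 1 = v := by
  simpa only [Fin.sum_univ_two] using b.sum_repr v

noncomputable def normForm (b : Basis (Fin 2) R M) (α : R) : QuadraticForm R M :=
  α • linMulLin (b.coord 0) (b.coord 0) + linMulLin (b.coord 0) (b.coord 1) +
    linMulLin (b.coord 1) (b.coord 1)

lemma normForm_apply (b : Basis (Fin 2) R M) (α : R) (v : M) :
    normForm b α v = α * b.repr v 0 ^ 2 + b.repr v 0 * b.repr v 1 + b.repr v 1 ^ 2 := by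
  simp only [normForm, add_apply, smul_apply, linMulLin_apply, Basis.coord_apply, smul_eq_mul]
  ring

/-- `(b 0, b 1)` is the basis `(f, e)` of the norm form `N(K)`. -/
def IsNormBasis (Q : QuadraticForm R M) (α : R) (b : Basis (Fin 2) R M) : Prop :=
  Q (b 0) = α ∧ Q (b 1) = 1 ∧ polar Q (b 1) (b 0) = 1

lemma isNormBasis_normForm (b : Basis (Fin 2) R M) (α : R) :
    IsNormBasis (normForm b α) α b :=
  ⟨by simp [normForm_apply], by simp [normForm_apply], by simp [polar, normForm_apply]⟩

lemma IsNormBasis.eq_normForm {Q : QuadraticForm R M} {α : R} {b : Basis (Fin 2) R M}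
    (hb : IsNormBasis Q α b) : Q = normForm b α := by
  obtain ⟨h0, h1, h10⟩ := hb
  ext v
  conv_lhs => rw [← b.repr_smul_add_repr_smul v]
  rw [apply_smul_add_smul, polar_comm, h0, h1, h10, normForm_apply]
  ring

lemma normForm_equivalent {M' : Type*} [AddCommGroup M'] [Module R M'] (b : Basis (Fin 2) R M)
    (c : Basis (Fin 2) R M') (α : R) : (normForm b α).Equivalent (normForm c α) :=
  ⟨{ b.repr.trans c.repr.symm with map_app' := by simp [normForm_apply] }⟩

lemma IsNormBasis.equivalent {M' : Type*} [AddCommGroup M'] [Module R M'] {Q : QuadraticForm R M}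
    {Q' : QuadraticForm R M'} {α : R} {b : Basis (Fin 2) R M} {c : Basis (Fin 2) R M'}
    (hb : IsNormBasis Q α b) (hc : IsNormBasis Q' α c) : Q.Equivalent Q' := by
  rw [hb.eq_normForm, hc.eq_normForm]
  exact normForm_equivalent b c α

end NormForm

section Field
variable {K V : Type*} [Field K] [AddCommGroup V] [Module K V] {Q : QuadraticForm K V}

lemma qNondeg_of_polar (h : ∀ v, (∀ w, polar Q v w = 0) → v = 0) : QNondeg Q :=
  ⟨h, fun v hv => h v fun w => (polar_comm Q v w).trans (hv w)⟩

lemma QNondeg.exists_polar_eq_one (hQ : QNondeg Q) {e : V} (he : e ≠ 0) :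
    ∃ f, polar Q e f = 1 := by
  obtain ⟨n, hn⟩ : ∃ n, polar Q e n ≠ 0 := by
    by_contra! h
    exact he (hQ.1 e h)
  exact ⟨(polar Q e n)⁻¹ • n, by rw [polar_smul_right, smul_eq_mul, inv_mul_cancel₀ hn]⟩

end Field

section CharTwo
variable {K V : Type*} [Field K] [CharP K 2] [AddCommGroup V] [Module K V]
  {Q : QuadraticForm K V}

lemma QuadraticMap.polar_self_eq_zero (v : V) : polar Q v v = 0 := by
  rw [polar_self, CharTwo.two_nsmul]

lemma QuadraticMap.polar_smul_self_right (v : V) (c : K) : polar Q v (c • v) = 0 := by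
  rw [polar_smul_right, polar_self_eq_zero, smul_zero]

lemma QNondeg.finrank_ne_one (hQ : QNondeg Q) : finrank K V ≠ 1 := by
  intro h
  obtain ⟨u, hu, hspan⟩ := finrank_eq_one_iff'.1 h
  refine hu (hQ.1 u fun w => ?_)
  obtain ⟨c, rfl⟩ := hspan w
  exact polar_smul_self_right u c

lemma exists_basis_of_polar_eq_one (hdim : finrank K V = 2) {e f : V} (hef : polar Q e f = 1) :
    ∃ b : Basis (Fin 2) K V, b 0 = f ∧ b 1 = e := by
  have hli : LinearIndependent K ![f, e] := by
    refine LinearIndependent.pair_iff.2 fun s t hst => ?_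
    have hs : s = 0 := by
      simpa [polar_add_right, polar_smul_right, polar_self_eq_zero, hef, CharTwo.two_eq_zero]
        using congrArg (polar Q e) hst
    have he : e ≠ 0 := by
      rintro rfl
      simp at hef
    exact ⟨hs, by simpa [hs, he] using hst⟩
  exact ⟨basisOfLinearIndependentOfCardEqFinrank hli (by simp [hdim]), by simp, by simp⟩

lemma IsNormBasis.qNondeg {α : K} {b : Basis (Fin 2) K V} (hb : IsNormBasis Q α b) :
    QNondeg Q := by
  refine qNondeg_of_polar fun v hv => b.forall_coord_eq_zero_iff.1 fun i => ?_
  have hpolar (j : Fin 2) : polar Q v (b j) =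
      b.repr v 0 * polar Q (b 0) (b j) + b.repr v 1 * polar Q (b 1) (b j) := by
    conv_lhs => rw [← b.repr_smul_add_repr_smul v]
    simp only [polar_add_left, polar_smul_left, smul_eq_mul]
  have h0 := hpolar 0
  have h1 := hpolar 1
  rw [hv, polar_self_eq_zero, hb.2.2] at h0
  rw [hv, polar_self_eq_zero, polar_comm, hb.2.2] at h1
  fin_cases i
  · simpa using h1.symm
  · simpa using h0.symm

lemma normForm_anisotropic_iff (b : Basis (Fin 2) K V) (α : K) :
    (normForm b α).Anisotropic ↔ α ∉ (artinSchreier K).range := by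
  have h2 : (2 : K) = 0 := CharTwo.two_eq_zero
  constructor
  · rintro hQ ⟨t, rfl⟩
    obtain ⟨h0, h1, h10⟩ := isNormBasis_normForm b (artinSchreier K t)
    have hzero : normForm b (artinSchreier K t) ((1 : K) • b 0 + t • b 1) = 0 := by
      rw [apply_smul_add_smul, h0, h1, polar_comm, h10, artinSchreier_apply]
      linear_combination (t ^ 2 + t) * h2
    simpa using congrArg (fun v => b.repr v 0) (hQ _ hzero)
  · intro hα v hv
    rw [normForm_apply] at hv
    set x := b.repr v 0
    set y := b.repr v 1
    have hx : x = 0 := by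
      by_contra hx
      refine hα ⟨y / x, ?_⟩
      rw [artinSchreier_apply]
      field_simp
      linear_combination hv - α * x ^ 2 * h2
    have hy : y = 0 := by
      rw [hx] at hv
      simpa using hv
    refine b.ext_elem fun i => ?_
    fin_cases i
    · simpa using hx
    · simpa using hy

lemma IsNormBasis.anisotropic_iff {α : K} {b : Basis (Fin 2) K V} (hb : IsNormBasis Q α b) :
    Q.Anisotropic ↔ α ∉ (artinSchreier K).range := by
  rw [hb.eq_normForm]
  exact normForm_anisotropic_iff b α

lemma IsNormBasis.exists_of_add_mem_range {α β : K} {c : Basis (Fin 2) K V}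
    (hc : IsNormBasis Q β c) (hαβ : α + β ∈ (artinSchreier K).range) :
    ∃ d : Basis (Fin 2) K V, IsNormBasis Q α d := by
  obtain ⟨t, ht⟩ := hαβ
  obtain ⟨hc0, hc1, hc10⟩ := hc
  have hpolar : polar Q (c 1) (c 0 + t • c 1) = 1 := by
    rw [polar_add_right, polar_smul_self_right, hc10, add_zero]
  obtain ⟨d, hd0, hd1⟩ :=
    exists_basis_of_polar_eq_one (by simp [finrank_eq_card_basis c]) hpolar
  refine ⟨d, ?_, by rw [hd1, hc1], by rw [hd0, hd1, hpolar]⟩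
  rw [hd0, ← one_smul K (c 0), apply_smul_add_smul, hc0, hc1, polar_comm, hc10]
  rw [artinSchreier_apply] at ht
  linear_combination ht + β * CharTwo.two_eq_zero (R := K)

variable [Finite K]

lemma exists_smul_add_isotropic {u w : V} (hu : Q u ≠ 0) (huw : polar Q u w = 0) :
    ∃ s : K, Q (s • u + w) = 0 := by
  obtain ⟨s, hs⟩ := isSquare_of_charTwo' (Q w / Q u)
  refine ⟨s, ?_⟩
  rw [← one_smul K w, apply_smul_add_smul, huw, _root_.sq, ← hs, div_mul_cancel₀ _ hu, one_pow,
    one_mul, mul_zero, add_zero, CharTwo.add_self_eq_zero]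

lemma QuadraticMap.Anisotropic.mem_span_singleton_of_polar_eq_zero (hQ : Q.Anisotropic)
    {u w : V} (hu : u ≠ 0) (huw : polar Q u w = 0) : w ∈ K ∙ u := by
  obtain ⟨s, hs⟩ := exists_smul_add_isotropic (fun h => hu (hQ u h)) huw
  exact Submodule.mem_span_singleton.2 ⟨-s, by rw [neg_smul, neg_eq_iff_add_eq_zero, hQ _ hs]⟩

lemma QuadraticMap.Anisotropic.finrank_le_two [FiniteDimensional K V] (hQ : Q.Anisotropic) :
    finrank K V ≤ 2 := by
  rcases subsingleton_or_nontrivial V with hV | hV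
  · simp [finrank_zero_of_subsingleton]
  obtain ⟨u, hu⟩ := exists_ne (0 : V)
  have hker : LinearMap.ker (Q.polarBilin u) ≤ K ∙ u := fun w hw =>
    hQ.mem_span_singleton_of_polar_eq_zero hu hw
  have hrank := (Q.polarBilin u).finrank_range_add_finrank_ker
  have hrange := (LinearMap.range (Q.polarBilin u)).finrank_le
  have hkerle := (Submodule.finrank_mono hker).trans (finrank_span_singleton hu).le
  rw [finrank_self] at hrange
  omega

lemma finrank_eq_two_of_anisotropic [FiniteDimensional K V] [Nontrivial V] (hnd : QNondeg Q)
    (hQ : Q.Anisotropic) : finrank K V = 2 := by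
  have := hQ.finrank_le_two
  have := hnd.finrank_ne_one
  have : 0 < finrank K V := finrank_pos
  omega

lemma exists_isNormBasis (hnd : QNondeg Q) (hQ : Q.Anisotropic) (hdim : finrank K V = 2) :
    ∃ (α : K) (b : Basis (Fin 2) K V), IsNormBasis Q α b := by
  have : Nontrivial V := Module.nontrivial_of_finrank_eq_succ hdim
  obtain ⟨v, hv⟩ := exists_ne (0 : V)
  obtain ⟨s, hs⟩ := isSquare_of_charTwo' (Q v)⁻¹
  have hQe : Q (s • v) = 1 := by
    rw [QuadraticMap.map_smul, smul_eq_mul, ← hs, inv_mul_cancel₀ fun h => hv (hQ v h)]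
  have he : s • v ≠ 0 := fun h => by
    rw [h, Q.map_zero] at hQe
    exact zero_ne_one hQe
  obtain ⟨f, hf⟩ := hnd.exists_polar_eq_one he
  obtain ⟨b, hb0, hb1⟩ := exists_basis_of_polar_eq_one hdim hf
  exact ⟨Q f, b, by rw [hb0], by rw [hb1, hQe], by rw [hb0, hb1, hf]⟩

lemma equivalent_of_anisotropic {W : Type*} [FiniteDimensional K V] [Nontrivial V]
    [AddCommGroup W] [Module K W] [FiniteDimensional K W] [Nontrivial W]
    {Q' : QuadraticForm K W} (hnd : QNondeg Q) (hQ : Q.Anisotropic)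
    (hnd' : QNondeg Q') (hQ' : Q'.Anisotropic) : Q.Equivalent Q' := by
  obtain ⟨α, b, hb⟩ := exists_isNormBasis hnd hQ (finrank_eq_two_of_anisotropic hnd hQ)
  obtain ⟨β, c, hc⟩ := exists_isNormBasis hnd' hQ' (finrank_eq_two_of_anisotropic hnd' hQ')
  obtain ⟨d, hd⟩ := hc.exists_of_add_mem_range <|
    add_mem_range_artinSchreier (hb.anisotropic_iff.1 hQ) (hc.anisotropic_iff.1 hQ')
  exact hb.equivalent hd

end CharTwo

/-- an anisotropic non-degenerate quadratic space over a finite field of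
characteristic 2 has dimension at most 2; in dimension 2 it is isometric to the norm form
`N(K)`; and the Witt group `WQ(K)` has order 2 (all non-trivial anisotropic spaces are
isometric, and there is one). -/
theorem stmt13 {K : Type*} [Field K] [Fintype K] (h2 : ringChar K = 2)
    {V : Type} [AddCommGroup V] [Module K V] [FiniteDimensional K V]
    (Q : QuadraticForm K V) (hnd : QNondeg Q) (han : ∀ v, Q v = 0 → v = 0) :
    Module.finrank K V ≤ 2 ∧
    (Module.finrank K V = 2 → ∃ (α : K) (b : Module.Basis (Fin 2) K V),
      Irreducible (Polynomial.X ^ 2 + Polynomial.X + Polynomial.C α) ∧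
      Q (b 0) = α ∧ Q (b 1) = 1 ∧ polar Q (b 1) (b 0) = 1) ∧
    ((∀ (V₂ : Type) [AddCommGroup V₂] [Module K V₂] (Q₂ : QuadraticForm K V₂),
      FiniteDimensional K V₂ → QNondeg Q₂ → (∀ v, Q₂ v = 0 → v = 0) →
      Nontrivial V → Nontrivial V₂ → ∃ f : V ≃ₗ[K] V₂, ∀ v, Q₂ (f v) = Q v) ∧
     ∃ (V₂ : Type) (_ : AddCommGroup V₂), ∃ (_ : Module K V₂) (Q₂ : QuadraticForm K V₂),
      FiniteDimensional K V₂ ∧ QNondeg Q₂ ∧ (∀ v, Q₂ v = 0 → v = 0) ∧ Nontrivial V₂) := by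
  have : CharP K 2 := ringChar.of_eq h2
  have hQ : Q.Anisotropic := han
  refine ⟨hQ.finrank_le_two, fun hdim => ?_, fun V₂ _ _ Q₂ _ hnd₂ han₂ _ _ => ?_, ?_⟩
  · obtain ⟨α, b, hb⟩ := exists_isNormBasis hnd hQ hdim
    exact ⟨α, b, irreducible_X_sq_add_X_add_C (hb.anisotropic_iff.1 hQ), hb⟩
  · obtain ⟨e⟩ := equivalent_of_anisotropic hnd hQ hnd₂ han₂
    exact ⟨e.toLinearEquiv, e.map_app⟩
  · obtain ⟨α, hα⟩ := exists_notMem_range_artinSchreier (K := K)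
    -- `Shrink` moves `Fin 2 → K` down to `Type`, where the statement asks for the space.
    let b := (Pi.basisFun K (Fin 2)).map (Shrink.linearEquiv.{0} K (Fin 2 → K)).symm
    have hb := isNormBasis_normForm b α
    exact ⟨_, _, _, normForm b α, .of_basis b, hb.qNondeg, hb.anisotropic_iff.2 hα,
      Module.nontrivial_of_finrank_eq_succ (finrank_eq_card_basis b)⟩
end

section
/- Let (V,Q) be a non-degenerate quadratic space over a field K with [(V,Q)] = 0 in the Witt group WQ(K), and let W = W^⊥ be a totally singular subspace of V (Q(W) = 0). Then for every g ∈ O(V,Q), the Dickson invariant satisfies D(g) = (−1)^{dim(W/(W ∩ Wg))}. -/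
open QuadraticMap

/-- Orthogonal complement of a submodule with respect to the polarization of `Q`. -/
def qperp {K V : Type*} [Field K] [AddCommGroup V] [Module K V]
    (Q : QuadraticForm K V) (U : Submodule K V) : Submodule K V :=
  LinearMap.BilinForm.orthogonal Q.polarBilin U

/-! The polar form `B` of `Q` is `g`-invariant, so `ker (g - 1) = (range (g - 1))^⊥`. On
`M = (g - 1)⁻¹ W` the form `(v, w) ↦ B ((g - 1) v, w)` is alternating, since
`B ((g - 1) v, v) = -Q ((g - 1) v)` and `W` is totally singular; so its rank is even. Its kernel is
`M ∩ (range (g - 1) ∩ W)^⊥ = ker (g - 1) + W ∩ M`, and counting dimensions with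
`dim V = 2 dim W` turns this parity into `rank (g - 1) ≡ dim W - dim (W ∩ g⁻¹ W) (mod 2)`. -/

open LinearMap Submodule Module

theorem Submodule.finrank_comap_eq_finrank_range_inf_add_finrank_ker {K V V' : Type*} [Field K]
    [AddCommGroup V] [Module K V] [AddCommGroup V'] [Module K V'] [FiniteDimensional K V]
    (f : V →ₗ[K] V') (W : Submodule K V') :
    finrank K (W.comap f) = finrank K ↥(range f ⊓ W) + finrank K (ker f) := by
  have h := finrank_range_add_finrank_ker (f.domRestrict (W.comap f))
  rwa [range_domRestrict, map_comap_eq, ker_domRestrict, ← finrank_map_subtype_eq,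
    map_comap_subtype, inf_eq_right.mpr (ker_le_comap f), eq_comm] at h

theorem Submodule.inf_comap_sub_id {K V : Type*} [Field K] [AddCommGroup V] [Module K V]
    (f : V →ₗ[K] V) (W : Submodule K V) :
    W ⊓ W.comap (f - LinearMap.id) = W ⊓ W.comap f := by
  ext v
  simp only [mem_inf, mem_comap, LinearMap.sub_apply, id_apply]
  exact and_congr_right fun hv => sub_mem_iff_left W hv

theorem Submodule.finrank_inf_map_eq_finrank_inf_comap {K V : Type*} [Field K] [AddCommGroup V]
    [Module K V] (g : V ≃ₗ[K] V) (W : Submodule K V) :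
    finrank K ↥(W ⊓ W.map (g : V →ₗ[K] V)) = finrank K ↥(W ⊓ W.comap (g : V →ₗ[K] V)) := by
  rw [← LinearEquiv.finrank_map_eq g (W ⊓ W.comap (g : V →ₗ[K] V)), map_inf _ g.injective,
    map_comap_eq_of_surjective g.surjective, inf_comm]

namespace LinearMap.BilinForm

variable {K E : Type*} [Field K] [AddCommGroup E] [Module K E] {B : LinearMap.BilinForm K E}

theorem orthogonal_sup (S S' : Submodule K E) :
    B.orthogonal (S ⊔ S') = B.orthogonal S ⊓ B.orthogonal S' := by
  ext v
  simp only [mem_orthogonal_iff, Submodule.mem_inf]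
  refine ⟨fun h => ⟨fun x hx => h x (mem_sup_left hx), fun x hx => h x (mem_sup_right hx)⟩, ?_⟩
  rintro ⟨h, h'⟩ _ hx
  obtain ⟨a, ha, b, hb, rfl⟩ := mem_sup.mp hx
  rw [map_add, LinearMap.add_apply, h a ha, h' b hb, add_zero]

variable [FiniteDimensional K E]

theorem orthogonal_inf (hB : B.Nondegenerate) (hB₀ : B.IsRefl) (S S' : Submodule K E) :
    B.orthogonal (S ⊓ S') = B.orthogonal S ⊔ B.orthogonal S' := by
  rw [← orthogonal_orthogonal hB hB₀ (B.orthogonal S ⊔ B.orthogonal S'), orthogonal_sup,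
    orthogonal_orthogonal hB hB₀, orthogonal_orthogonal hB hB₀]

theorem two_mul_finrank_eq_finrank_of_orthogonal_eq (hB : B.Nondegenerate) {L : Submodule K E}
    (hL : B.orthogonal L = L) : 2 * finrank K L = finrank K E := by
  have h := finrank_orthogonal hB L
  rw [hL] at h
  have := L.finrank_le
  omega

-- A maximal isotropic subspace `L` of an alternating form satisfies `L^⊥ = L`, and then
-- `dim L + dim L^⊥ = dim E + dim (ker B)`.
theorem IsAlt.even_finrank_sub_finrank_ker (hB : B.IsAlt) :
    Even (finrank K E - finrank K (ker B)) := by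
  obtain ⟨L, hL, hmax⟩ := set_has_maximal_iff_noetherian.mpr inferInstance
    {L : Submodule K E | ∀ x ∈ L, ∀ y ∈ L, B x y = 0} ⟨⊥, by simp⟩
  have hLL : B.orthogonal L = L := by
    refine le_antisymm (fun v hv => ?_) (fun v hv w hw => hL w hw v hv)
    by_contra hvL
    refine hmax (L ⊔ K ∙ v) (fun x hx y hy => ?_) (left_lt_sup.mpr ?_)
    · obtain ⟨l, hl, _, hav, rfl⟩ := mem_sup.mp hx
      obtain ⟨l', hl', _, hbv, rfl⟩ := mem_sup.mp hy
      obtain ⟨a, rfl⟩ := mem_span_singleton.mp hav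
      obtain ⟨b, rfl⟩ := mem_span_singleton.mp hbv
      simp [hL l hl l' hl', hv l hl, hB.isRefl _ _ (hv l' hl'), hB.self_eq_zero v]
    · rwa [span_singleton_le_iff_mem]
  have hker : ker B ≤ L :=
    orthogonal_top_eq_ker hB.isRefl ▸ hLL ▸ orthogonal_le le_top
  have h := finrank_add_finrank_orthogonal hB.isRefl L
  rw [hLL, orthogonal_top_eq_ker hB.isRefl, inf_eq_right.mpr hker] at h
  have := (ker B).finrank_le
  exact ⟨finrank K L - finrank K (ker B), by omega⟩

end LinearMap.BilinForm

namespace QuadraticMap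

variable {K V : Type*} [Field K] [AddCommGroup V] [Module K V] {Q : QuadraticForm K V}
  {f : V →ₗ[K] V}

theorem polarBilin_map_map (hf : ∀ v, Q (f v) = Q v) (x y : V) :
    Q.polarBilin (f x) (f y) = Q.polarBilin x y := by
  simp only [polarBilin_apply_apply, polar, ← map_add, hf]

theorem polarBilin_sub_self_apply_self (hf : ∀ v, Q (f v) = Q v) (v : V) :
    Q.polarBilin (f v - v) v = -Q (f v - v) := by
  simp only [polarBilin_apply_apply, polar, sub_add_cancel, hf]
  ring

theorem polarBilin_isRefl (Q : QuadraticForm K V) : BilinForm.IsRefl Q.polarBilin :=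
  fun x y h => by rwa [polarBilin_apply_apply, polar_comm, ← polarBilin_apply_apply]

variable {W : Submodule K V}

variable (Q f W) in
def displacementForm : LinearMap.BilinForm K (W.comap (f - LinearMap.id)) :=
  Q.polarBilin.compl₁₂ ((f - LinearMap.id) ∘ₗ (W.comap _).subtype) (W.comap _).subtype

@[simp]
theorem displacementForm_apply (v w : W.comap (f - LinearMap.id)) :
    displacementForm Q f W v w = Q.polarBilin (f v - v) w :=
  rfl

theorem displacementForm_isAlt (hf : ∀ v, Q (f v) = Q v) (hW0 : ∀ v ∈ W, Q v = 0) :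
    (displacementForm Q f W).IsAlt := fun v => by
  have hv : f v - v ∈ W := v.2
  rw [displacementForm_apply, polarBilin_sub_self_apply_self hf, hW0 _ hv, neg_zero]

variable [FiniteDimensional K V]

theorem ker_sub_id_eq_qperp_range (hQ : QNondeg Q) (hf : ∀ v, Q (f v) = Q v) :
    ker (f - LinearMap.id) = qperp Q (range (f - LinearMap.id)) := by
  refine eq_of_le_of_finrank_le (fun v hv => ?_) ?_
  · rintro _ ⟨w, rfl⟩
    have hv : f v = v := sub_eq_zero.mp hv
    simp [← polarBilin_map_map hf w v, hv]
  · rw [qperp, BilinForm.finrank_orthogonal hQ]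
    have := finrank_range_add_finrank_ker (f - LinearMap.id)
    omega

theorem qperp_range_sub_id_sup (hQ : QNondeg Q) (hf : ∀ v, Q (f v) = Q v)
    (hW : W = qperp Q W) :
    qperp Q (range (f - LinearMap.id) ⊔ W) = ker (f - LinearMap.id) ⊓ W := by
  rw [qperp, BilinForm.orthogonal_sup, ← qperp, ← qperp, ← ker_sub_id_eq_qperp_range hQ hf,
    ← hW]

theorem qperp_range_sub_id_inf (hQ : QNondeg Q) (hf : ∀ v, Q (f v) = Q v)
    (hW : W = qperp Q W) :
    qperp Q (range (f - LinearMap.id) ⊓ W) = ker (f - LinearMap.id) ⊔ W := by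
  rw [qperp, BilinForm.orthogonal_inf hQ (polarBilin_isRefl Q), ← qperp, ← qperp,
    ← ker_sub_id_eq_qperp_range hQ hf, ← hW]

theorem finrank_ker_displacementForm (hQ : QNondeg Q) (hf : ∀ v, Q (f v) = Q v)
    (hW : W = qperp Q W) (hW0 : ∀ v ∈ W, Q v = 0) :
    finrank K (ker (displacementForm Q f W)) =
      finrank K ↥(ker (f - LinearMap.id) ⊔ W ⊓ W.comap (f - LinearMap.id)) := by
  set M := W.comap (f - LinearMap.id)
  have hker :
      ker (displacementForm Q f W) = (qperp Q (M.map (f - LinearMap.id))).comap M.subtype := by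
    ext v
    simp only [mem_ker, LinearMap.ext_iff, LinearMap.zero_apply, mem_comap, qperp,
      BilinForm.mem_orthogonal_iff, mem_map, forall_exists_index, and_imp,
      forall_apply_eq_imp_iff₂, Subtype.forall]
    exact forall₂_congr fun w hw =>
      (displacementForm_isAlt hf hW0).eq_iff (x := v) (y := ⟨w, hw⟩)
  rw [hker, ← finrank_map_subtype_eq, map_comap_subtype, map_comap_eq,
    qperp_range_sub_id_inf hQ hf hW, inf_comm, sup_inf_assoc_of_le _ (ker_le_comap _)]

theorem finrank_range_sub_id_mod_two (hQ : QNondeg Q) (hf : ∀ v, Q (f v) = Q v)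
    (hW : W = qperp Q W) (hW0 : ∀ v ∈ W, Q v = 0) :
    finrank K (range (f - LinearMap.id)) % 2 =
      (finrank K W - finrank K ↥(W ⊓ W.comap f)) % 2 := by
  obtain ⟨r, hr⟩ := (displacementForm_isAlt hf hW0).even_finrank_sub_finrank_ker
  rw [finrank_ker_displacementForm hQ hf hW hW0] at hr
  have hperp := BilinForm.finrank_orthogonal hQ (range (f - LinearMap.id) ⊔ W)
  rw [← qperp, qperp_range_sub_id_sup hQ hf hW, inf_comm] at hperp
  rw [← inf_comap_sub_id]
  set T := f - LinearMap.id
  have hdimW := BilinForm.two_mul_finrank_eq_finrank_of_orthogonal_eq hQ hW.symm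
  have hrank := finrank_range_add_finrank_ker T
  have hdimM := finrank_comap_eq_finrank_range_inf_add_finrank_ker T W
  have hkerF_le : finrank K ↥(ker T ⊔ W ⊓ W.comap T) ≤ finrank K (W.comap T) :=
    finrank_mono (sup_le (ker_le_comap T) inf_le_right)
  have hkerF := finrank_sup_add_finrank_inf_eq (ker T) (W ⊓ W.comap T)
  rw [inf_left_comm, inf_eq_left.mpr (ker_le_comap T)] at hkerF
  have hsup := finrank_sup_add_finrank_inf_eq (range T) W
  have := finrank_le (range T ⊔ W)
  have := finrank_mono (inf_le_left : W ⊓ W.comap T ≤ W)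
  omega

end QuadraticMap

/-- if `(V,Q)` is split (contains a totally singular `W = W^⊥`), then the
Dickson invariant `D(g) = (−1)^{rank (g − id)}` satisfies
`D(g) = (−1)^{dim (W / (W ∩ Wg))}` for every `g ∈ O(V,Q)`. -/
theorem stmt18 {K V : Type*} [Field K] [AddCommGroup V] [Module K V]
    [FiniteDimensional K V] (Q : QuadraticForm K V) (hnd : QNondeg Q)
    (W : Submodule K V) (hW : W = qperp Q W) (hW0 : ∀ v ∈ W, Q v = 0)
    (g : V ≃ₗ[K] V) (hg : ∀ v, Q (g v) = Q v) :
    ((-1 : ℤ) ^ Module.finrank K ↥(LinearMap.range ((g : V →ₗ[K] V) - LinearMap.id))) =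
      (-1 : ℤ) ^ (Module.finrank K ↥W -
        Module.finrank K ↥(W ⊓ W.map (g : V →ₗ[K] V))) := by
  rw [neg_one_pow_eq_pow_mod_two, finrank_range_sub_id_mod_two hnd hg hW hW0,
    finrank_inf_map_eq_finrank_inf_comap, ← neg_one_pow_eq_pow_mod_two]
end
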